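/- The number of k-cycles ρ in S_k at minimal transposition distance c(σ) - 1 from a permutation σ with m cycles is at most ((k-1)!/(k-m+1)!)·k^m. -/

import Mathlib

/-!
A list of `m - 1` transpositions determines `ρ` through `σ ρ⁻¹`, and there are at most
`C(k, 2)` transpositions, so at most `C(k, 2)^(m-1)` permutations `ρ` lie at distance `m - 1`
from `σ`. When `2(m - 1) ≤ k + 1` this is within the bound, since `C(k, 2) ≤ k (k - m + 2)` and
`(k - m + 2)^(m-1) ≤ k! / (k - m + 1)!`. Otherwise `m` is so large that even the trivial
count `k!` of all permutations is.
-/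

open scoped Classical

/-- The Cayley weight of a permutation: the minimum number of transpositions whose
product equals `σ`. -/
noncomputable def cayleyWeight {k : ℕ} (σ : Equiv.Perm (Fin k)) : ℕ :=
  sInf {m | ∃ l : List (Equiv.Perm (Fin k)),
    l.length = m ∧ (∀ τ ∈ l, τ.IsSwap) ∧ l.prod = σ}

/-- The number of cycles of a permutation, counting fixed points. -/
def cycleCount {k : ℕ} (σ : Equiv.Perm (Fin k)) : ℕ :=
  Multiset.card σ.cycleType + (k - σ.support.card)

open Finset Equiv
open scoped Nat Pointwise

namespace Nat

lemma Partition.card_parts_le {n : ℕ} (p : n.Partition) : Multiset.card p.parts ≤ n := by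
  simpa [p.parts_sum] using Multiset.card_nsmul_le_sum fun _ hi => p.parts_pos hi

lemma Partition.card_parts_pos {n : ℕ} (p : n.Partition) (hn : n ≠ 0) :
    0 < Multiset.card p.parts := by
  refine Multiset.card_pos.2 fun h => hn ?_
  rw [← p.parts_sum, h, Multiset.sum_zero]

lemma choose_two_pow_mul_factorial_le {k j : ℕ} (h : 2 * j ≤ k + 1) :
    k.choose 2 ^ j * (k - j)! ≤ k ^ j * k ! := by
  have hchoose : k.choose 2 ≤ k * (k + 1 - j) := by
    rw [choose_two_right]
    refine Nat.div_le_of_le_mul ?_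
    calc k * (k - 1) ≤ k * (2 * (k + 1 - j)) := Nat.mul_le_mul_left k (by omega)
      _ = 2 * (k * (k + 1 - j)) := by ring
  calc k.choose 2 ^ j * (k - j)! ≤ (k * (k + 1 - j)) ^ j * (k - j)! := by gcongr
    _ = k ^ j * ((k + 1 - j) ^ j * (k - j)!) := by ring
    _ ≤ k ^ j * (k.descFactorial j * (k - j)!) := by gcongr; exact pow_sub_le_descFactorial k j
    _ = k ^ j * k ! := by rw [mul_comm _ (k - j)!, factorial_mul_descFactorial (by omega)]

lemma factorial_sub_le_pow {k j : ℕ} (hk : 0 < k) (h : k ≤ 2 * j) : (k - j)! ≤ k ^ j :=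
  calc (k - j)! ≤ (k - j) ^ (k - j) := factorial_le_pow _
    _ ≤ k ^ (k - j) := Nat.pow_le_pow_left (sub_le k j) _
    _ ≤ k ^ j := Nat.pow_le_pow_right hk (by omega)

lemma mul_factorial_le_of_le_choose_two_pow_of_le_factorial {N k m : ℕ} (hm : 1 ≤ m)
    (hmk : m ≤ k) (hN : N ≤ k.choose 2 ^ (m - 1)) (hN' : N ≤ k !) :
    N * (k - m + 1)! ≤ (k - 1)! * k ^ m := by
  obtain ⟨j, rfl⟩ : ∃ j, m = j + 1 := ⟨m - 1, by omega⟩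
  have hfac : (k - 1)! * k ^ (j + 1) = k ^ j * k ! := by
    rw [← mul_factorial_pred (by omega : k ≠ 0)]; ring
  rw [show k - (j + 1) + 1 = k - j by omega, hfac]
  rcases le_or_gt (2 * j) (k + 1) with hj | hj
  · exact (Nat.mul_le_mul_right _ hN).trans (choose_two_pow_mul_factorial_le hj)
  · calc N * (k - j)! ≤ k ! * k ^ j :=
          Nat.mul_le_mul hN' (factorial_sub_le_pow (by omega) (by omega))
      _ = k ^ j * k ! := mul_comm _ _

end Nat

lemma Finset.list_prod_mem_pow {M : Type*} [Monoid M] [DecidableEq M] {s : Finset M}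
    {l : List M} (hl : ∀ x ∈ l, x ∈ s) : l.prod ∈ s ^ l.length := by
  induction l with
  | nil => simp
  | cons a l ih =>
    rw [List.prod_cons, List.length_cons, pow_succ']
    exact mul_mem_mul (hl a List.mem_cons_self) (ih fun x hx => hl x (List.mem_cons_of_mem a hx))

lemma Equiv.Perm.card_filter_isSwap_le (α : Type*) [Fintype α] [DecidableEq α] :
    #(univ.filter fun τ : Perm α => τ.IsSwap) ≤ (Fintype.card α).choose 2 :=
  calc #(univ.filter fun τ : Perm α => τ.IsSwap)
      ≤ #(((univ : Finset α).offDiag.image Sym2.mk.uncurry).image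
          (Sym2.lift ⟨swap, fun a b => swap_comm a b⟩)) := by
        refine card_le_card fun τ hτ => ?_
        obtain ⟨a, b, hab, rfl⟩ := (mem_filter.1 hτ).2
        simp only [mem_image, mem_offDiag, mem_univ, true_and, Prod.exists]
        exact ⟨s(a, b), ⟨a, b, hab, rfl⟩, rfl⟩
    _ ≤ #((univ : Finset α).offDiag.image Sym2.mk.uncurry) := card_image_le
    _ = (Fintype.card α).choose 2 := Sym2.card_image_offDiag _

section

variable {k : ℕ}

lemma cycleCount_eq_card_parts_partition (σ : Perm (Fin k)) :
    cycleCount σ = Multiset.card σ.partition.parts := by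
  simp [cycleCount, Perm.parts_partition]

lemma cycleCount_le (σ : Perm (Fin k)) : cycleCount σ ≤ k := by
  simpa [cycleCount_eq_card_parts_partition] using σ.partition.card_parts_le

lemma one_le_cycleCount (hk : k ≠ 0) (σ : Perm (Fin k)) : 1 ≤ cycleCount σ := by
  rw [cycleCount_eq_card_parts_partition]
  exact σ.partition.card_parts_pos (by simpa using hk)

lemma mem_pow_cayleyWeight (π : Perm (Fin k)) :
    π ∈ (univ.filter fun τ : Perm (Fin k) => τ.IsSwap) ^ cayleyWeight π := by
  obtain ⟨l, hlen, hswap, rfl⟩ : ∃ l : List (Perm (Fin k)), l.length = cayleyWeight π ∧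
      (∀ τ ∈ l, τ.IsSwap) ∧ l.prod = π := by
    refine Nat.sInf_mem (s := {m | ∃ l : List (Perm (Fin k)),
      l.length = m ∧ (∀ τ ∈ l, τ.IsSwap) ∧ l.prod = π}) ?_
    obtain ⟨l, hprod, hswap⟩ := (Perm.truncSwapFactors π).out
    exact ⟨l.length, l, rfl, hswap, hprod⟩
  rw [← hlen]
  exact list_prod_mem_pow fun τ hτ => mem_filter.2 ⟨mem_univ τ, hswap τ hτ⟩

lemma card_filter_cayleyWeight_mul_inv_eq_le (σ : Perm (Fin k)) (n : ℕ) :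
    #(univ.filter fun ρ : Perm (Fin k) => cayleyWeight (σ * ρ⁻¹) = n) ≤ k.choose 2 ^ n := by
  calc #(univ.filter fun ρ : Perm (Fin k) => cayleyWeight (σ * ρ⁻¹) = n)
      ≤ #((univ.filter fun τ : Perm (Fin k) => τ.IsSwap) ^ n) := by
        refine card_le_card_of_injOn (fun ρ => σ * ρ⁻¹) (fun ρ hρ => ?_)
          fun ρ _ ρ' _ h => inv_injective (mul_left_cancel h)
        rw [← (mem_filter.1 hρ).2]
        exact mem_pow_cayleyWeight _
    _ ≤ #(univ.filter fun τ : Perm (Fin k) => τ.IsSwap) ^ n := card_pow_le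
    _ ≤ k.choose 2 ^ n := by
        gcongr
        simpa using Perm.card_filter_isSwap_le (Fin k)

end

/-- The number of `k`-cycles at minimal transposition distance `c(σ) - 1` from a
permutation `σ` with `m = c(σ)` cycles is at most `((k-1)!/(k-m+1)!)·k^m`. -/
theorem card_k_cycles_min_distance_le (k : ℕ) (σ : Equiv.Perm (Fin k)) :
    ((Finset.univ.filter
        (fun ρ : Equiv.Perm (Fin k) => ρ.IsCycle ∧ ρ.support = Finset.univ ∧
          cayleyWeight (σ * ρ⁻¹) = cycleCount σ - 1)).card : ℝ) ≤
      (Nat.factorial (k-1) : ℝ) / (Nat.factorial (k - cycleCount σ + 1) : ℝ) *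
        (k : ℝ) ^ (cycleCount σ) := by
  set F := univ.filter fun ρ : Perm (Fin k) =>
    ρ.IsCycle ∧ ρ.support = univ ∧ cayleyWeight (σ * ρ⁻¹) = cycleCount σ - 1
  rcases Nat.lt_or_ge k 2 with hk | hk
  · have no_full_cycle (ρ : Perm (Fin k)) (hρ : ρ.IsCycle) : ρ.support ≠ univ := fun hs => by
      have := hρ.two_le_card_support
      rw [hs, Finset.card_univ, Fintype.card_fin] at this
      omega
    have hF : F = ∅ := filter_false_of_mem fun ρ _ h => no_full_cycle ρ h.1 h.2.1
    rw [hF, card_empty, Nat.cast_zero]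
    positivity
  have h_dist : #F ≤ k.choose 2 ^ (cycleCount σ - 1) :=
    (card_le_card (monotone_filter_right _ fun _ _ h => h.2.2)).trans
      (card_filter_cayleyWeight_mul_inv_eq_le σ _)
  have h_all : #F ≤ k ! := (card_le_univ F).trans_eq (by rw [Fintype.card_perm, Fintype.card_fin])
  rw [div_mul_eq_mul_div, le_div_iff₀ (by positivity)]
  exact_mod_cast Nat.mul_factorial_le_of_le_choose_two_pow_of_le_factorial
    (one_le_cycleCount (by omega) σ) (cycleCount_le σ) h_dist h_all
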